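/- Let R be a commutative ring with sr(R) < ∞. Assume n ≥ sr(R) + k and let (v_1,...,v_k) be a unimodular sequence in R^{2n}. Then there is a hyperbolic basis {x_1, y_1, ..., x_n, y_n} of R^{2n} such that v_1,...,v_k lie in the span ⟨x_1, y_1, ..., x_{k-1}, y_{k-1}, x_k⟩. -/

import Mathlib

open CategoryTheory Topology DirectSum
/-- A vector `(r₁, …, r_m) ∈ R^m` is unimodular if some `R`-linear combination of its
entries equals `1`. -/
def IsUnimodularVec {R : Type} [CommRing R] {m : ℕ} (v : Fin m → R) : Prop :=
  ∃ s : Fin m → R, ∑ i, s i * v i = 1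

/-- The stable range condition `(S_m)`. -/
def SatSR (R : Type) [CommRing R] (m : ℕ) : Prop :=
  ∀ v : Fin (m + 1) → R, IsUnimodularVec v →
    ∃ t : Fin m → R, IsUnimodularVec (fun i : Fin m => v i.castSucc + t i * v (Fin.last m))

/-- The stable rank `sr(R)`: the least `m` such that `(S_m)` holds (junk value if none). -/
noncomputable def srank (R : Type) [CommRing R] : ℕ := sInf {m | SatSR R m}

/-- The standard symplectic form
`h(x, y) = Σ_{i=1}^n (x_{2i−1} y_{2i} − y_{2i−1} x_{2i})` on `R^{2n}`. -/
def symForm {R : Type} [CommRing R] {n : ℕ} (x y : Fin (2 * n) → R) : R :=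
  ∑ i : Fin n,
    (x ⟨2 * i.1, by have := i.2; omega⟩ * y ⟨2 * i.1 + 1, by have := i.2; omega⟩ -
      y ⟨2 * i.1, by have := i.2; omega⟩ * x ⟨2 * i.1 + 1, by have := i.2; omega⟩)

/-- An isotropic `k`-frame in `R^{2n}`: a `k`-tuple of vectors forming a basis of an
isotropic free direct summand. -/
def IsIsotropicFrame {R : Type} [CommRing R] {n k : ℕ} (x : Fin k → (Fin (2 * n) → R)) :
    Prop :=
  LinearIndependent R x ∧
    (∃ N : Submodule R (Fin (2 * n) → R),
      IsCompl (Submodule.span R (Set.range x)) N) ∧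
    ∀ i j, symForm (x i) (x j) = 0

/-- A hyperbolic `k`-frame in `R^{2n}`. -/
def IsHyperbolicFrame {R : Type} [CommRing R] {n k : ℕ}
    (x y : Fin k → (Fin (2 * n) → R)) : Prop :=
  IsIsotropicFrame x ∧ IsIsotropicFrame y ∧
    ∀ i j, symForm (x i) (y j) = if i = j then (1 : R) else 0

/-- The matrix `Q = Σ_{i=1}^n (e_{2i−1,2i}(1) − e_{2i,2i−1}(1))`. -/
def Qmat (n : ℕ) (R : Type) [CommRing R] : Matrix (Fin (2 * n)) (Fin (2 * n)) R :=
  Matrix.of fun i j =>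
    if j.1 = i.1 + 1 ∧ i.1 % 2 = 0 then (1 : R)
    else if i.1 = j.1 + 1 ∧ j.1 % 2 = 0 then -1 else 0

/-- The permutation `σ` with `σ(2i) = 2i − 1` and `σ(2i − 1) = 2i` (in `1`-indexed
notation), acting on `0`-indexed positions. -/
def sigmaIdx {n : ℕ} (i : Fin (2 * n)) : Fin (2 * n) :=
  if h : i.1 % 2 = 0 then ⟨i.1 + 1, by have := i.2; omega⟩ else ⟨i.1 - 1, by have := i.2; omega⟩

/-- The elementary symplectic matrices `E_{i,j}(r)`. -/
def ESpGens (n : ℕ) (R : Type) [CommRing R] :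
    Set (Matrix (Fin (2 * n)) (Fin (2 * n)) R) :=
  {E | ∃ (i j : Fin (2 * n)) (r : R), i ≠ j ∧
    E = if i = sigmaIdx j then 1 + Matrix.single i j r
        else
          1 + Matrix.single i j r -
            ((-1 : R) ^ (i.1 + j.1)) • Matrix.single (sigmaIdx i) (sigmaIdx j) r}

/-- The elementary symplectic group `ESp(2n, R)`, generated by the `E_{i,j}(r)`
(as a multiplicative closure; the generating set is closed under inversion). -/
def ESp (n : ℕ) (R : Type) [CommRing R] :
    Submonoid (Matrix (Fin (2 * n)) (Fin (2 * n)) R) :=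
  Submonoid.closure (ESpGens n R)


section SympDev

variable {R : Type} [CommRing R]

/-- Block model of `R^{2n}`. -/
abbrev BV (n : ℕ) (R : Type) [CommRing R] := Fin n → R × R

/-- standard symplectic form on the block model -/
def hB {n : ℕ} (v w : BV n R) : R := ∑ i, ((v i).1 * (w i).2 - (v i).2 * (w i).1)

lemma hB_add_left {n} (u v w : BV n R) : hB (u + v) w = hB u w + hB v w := by
  simp only [hB, ← Finset.sum_add_distrib]
  refine Finset.sum_congr rfl fun i _ => ?_
  simp only [Pi.add_apply, Prod.fst_add, Prod.snd_add]; ring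

lemma hB_add_right {n} (u v w : BV n R) : hB u (v + w) = hB u v + hB u w := by
  simp only [hB, ← Finset.sum_add_distrib]
  refine Finset.sum_congr rfl fun i _ => ?_
  simp only [Pi.add_apply, Prod.fst_add, Prod.snd_add]; ring

lemma hB_smul_left {n} (r : R) (v w : BV n R) : hB (r • v) w = r * hB v w := by
  simp only [hB, Finset.mul_sum]
  refine Finset.sum_congr rfl fun i _ => ?_
  simp only [Pi.smul_apply, Prod.smul_fst, Prod.smul_snd, smul_eq_mul]; ring

lemma hB_smul_right {n} (r : R) (v w : BV n R) : hB v (r • w) = r * hB v w := by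
  simp only [hB, Finset.mul_sum]
  refine Finset.sum_congr rfl fun i _ => ?_
  simp only [Pi.smul_apply, Prod.smul_fst, Prod.smul_snd, smul_eq_mul]; ring

lemma hB_self {n} (v : BV n R) : hB v v = 0 :=
  Finset.sum_eq_zero fun i _ => by ring

lemma hB_skew {n} (v w : BV n R) : hB v w = - hB w v := by
  simp only [hB, ← Finset.sum_neg_distrib]
  refine Finset.sum_congr rfl fun i _ => ?_; ring

lemma hB_zero_left {n} (v : BV n R) : hB 0 v = 0 := by
  refine Finset.sum_eq_zero fun i _ => ?_
  simp

lemma hB_zero_right {n} (v : BV n R) : hB v 0 = 0 := by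
  refine Finset.sum_eq_zero fun i _ => ?_
  simp

lemma hB_neg_right {n} (v w : BV n R) : hB v (-w) = - hB v w := by
  have : (-w) = (-1 : R) • w := by funext i; simp
  rw [this, hB_smul_right]; ring

lemma hB_sub_right {n} (u v w : BV n R) : hB u (v - w) = hB u v - hB u w := by
  rw [sub_eq_add_neg, hB_add_right, hB_neg_right]; ring

/-- form vanishes on disjointly supported vectors -/
lemma hB_orth {n} (v w : BV n R) (h : ∀ i, v i = 0 ∨ w i = 0) : hB v w = 0 := by
  apply Finset.sum_eq_zero; intro i _
  rcases h i with h | h <;> simp [h]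

/-- the form is a combination of the coordinates of `v` over the support of `w`. -/
lemma hB_mem_span {n} (v w : BV n R) (s : Set (Fin n)) (hw : ∀ i, i ∉ s → w i = 0) :
    hB v w ∈ Ideal.span {r | ∃ i ∈ s, r = (v i).1 ∨ r = (v i).2} := by
  apply Ideal.sum_mem
  intro i _
  by_cases hi : i ∈ s
  · have h1 : (v i).1 ∈ {r | ∃ i ∈ s, r = (v i).1 ∨ r = (v i).2} := ⟨i, hi, Or.inl rfl⟩
    have h2 : (v i).2 ∈ {r | ∃ i ∈ s, r = (v i).1 ∨ r = (v i).2} := ⟨i, hi, Or.inr rfl⟩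
    have m1 : (v i).1 * (w i).2 ∈ Ideal.span {r | ∃ i ∈ s, r = (v i).1 ∨ r = (v i).2} := by
      rw [mul_comm]; exact Ideal.mul_mem_left _ _ (Ideal.subset_span h1)
    have m2 : (v i).2 * (w i).1 ∈ Ideal.span {r | ∃ i ∈ s, r = (v i).1 ∨ r = (v i).2} := by
      rw [mul_comm]; exact Ideal.mul_mem_left _ _ (Ideal.subset_span h2)
    exact sub_mem m1 m2
  · simp [hw i hi]

/-- basis vectors -/
def Xb {n : ℕ} (i : Fin n) : BV n R := fun l => if l = i then ((1:R), 0) else 0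
def Yb {n : ℕ} (i : Fin n) : BV n R := fun l => if l = i then (0, (1:R)) else 0

@[simp] lemma Xb_apply_self {n} (i : Fin n) : (Xb (R := R) i) i = (1, 0) := by simp [Xb]
@[simp] lemma Yb_apply_self {n} (i : Fin n) : (Yb (R := R) i) i = (0, 1) := by simp [Yb]
lemma Xb_apply_ne {n} {i l : Fin n} (h : l ≠ i) : (Xb (R := R) i) l = 0 := by simp [Xb, h]
lemma Yb_apply_ne {n} {i l : Fin n} (h : l ≠ i) : (Yb (R := R) i) l = 0 := by simp [Yb, h]

@[simp] lemma hB_Xb_right {n} (v : BV n R) (i : Fin n) : hB v (Xb i) = - (v i).2 := by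
  rw [hB, Finset.sum_eq_single i]
  · simp
  · intro b _ hb; rw [Xb_apply_ne hb]; simp
  · simp

@[simp] lemma hB_Yb_right {n} (v : BV n R) (i : Fin n) : hB v (Yb i) = (v i).1 := by
  rw [hB, Finset.sum_eq_single i]
  · simp
  · intro b _ hb; rw [Yb_apply_ne hb]; simp
  · simp

@[simp] lemma hB_Xb_left {n} (v : BV n R) (i : Fin n) : hB (Xb i) v = (v i).2 := by
  rw [hB_skew]; simp

@[simp] lemma hB_Yb_left {n} (v : BV n R) (i : Fin n) : hB (Yb i) v = - (v i).1 := by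
  rw [hB_skew]; simp

lemma hB_sum_right {n} {ι : Type} (t : Finset ι) (v : BV n R) (w : ι → BV n R) :
    hB v (∑ j ∈ t, w j) = ∑ j ∈ t, hB v (w j) := by
  classical
  induction t using Finset.induction with
  | empty => simp [hB_zero_right]
  | insert a s' hx ih => rw [Finset.sum_insert hx, hB_add_right, ih,
      Finset.sum_insert hx]

lemma hB_sum_left {n} {ι : Type} (t : Finset ι) (v : BV n R) (w : ι → BV n R) :
    hB (∑ j ∈ t, w j) v = ∑ j ∈ t, hB (w j) v := by
  classical
  induction t using Finset.induction with
  | empty => simp [hB_zero_left]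
  | insert a s' hx ih => rw [Finset.sum_insert hx, hB_add_left, ih,
      Finset.sum_insert hx]

/-- expansion of a vector in the X/Y basis over a set containing its support -/
lemma bv_expand {n} (v : BV n R) (s : Finset (Fin n)) (hs : ∀ i, i ∉ s → v i = 0) :
    v = ∑ i ∈ s, ((v i).1 • Xb i + (v i).2 • Yb i) := by
  funext l
  rw [Finset.sum_apply]
  by_cases hl : l ∈ s
  · rw [Finset.sum_eq_single l]
    · simp [Prod.ext_iff]
    · intro b _ hb; simp [Xb_apply_ne (Ne.symm hb), Yb_apply_ne (Ne.symm hb)]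
    · intro h; exact absurd hl h
  · rw [hs l hl]
    apply Eq.symm; apply Finset.sum_eq_zero; intro b hb
    have : l ≠ b := fun h => hl (h ▸ hb)
    simp [Xb_apply_ne this, Yb_apply_ne this]

variable {R : Type} [CommRing R]


lemma span_range_eq_top_iff {ι : Type} [Fintype ι] (f : ι → R) :
    Ideal.span (Set.range f) = ⊤ ↔ ∃ c : ι → R, ∑ i, c i * f i = 1 := by
  constructor
  · intro h
    have h1 : (1 : R) ∈ Ideal.span (Set.range f) := h ▸ Submodule.mem_top
    rcases (Submodule.mem_span_range_iff_exists_fun R).1 h1 with ⟨c, hc⟩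
    exact ⟨c, by simpa [smul_eq_mul] using hc⟩
  · rintro ⟨c, hc⟩
    rw [Ideal.eq_top_iff_one]
    exact (Submodule.mem_span_range_iff_exists_fun R).2 ⟨c, by simpa [smul_eq_mul] using hc⟩

/-- stable range conditions are monotone in `m` -/
lemma satSR_succ {m : ℕ} (h : SatSR R m) : SatSR R (m + 1) := by
  intro a ha
  rcases ha with ⟨b, hb⟩
  set J : Fin (m + 2) := (Fin.last m).castSucc with hJ
  set L : Fin (m + 2) := Fin.last (m+1) with hL
  set d : R := b J * a J + b L * a L with hd
  have hrow : IsUnimodularVec (Fin.snoc (fun i : Fin m => a i.castSucc.castSucc) d) := by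
    refine ⟨Fin.snoc (fun i : Fin m => b i.castSucc.castSucc) 1, ?_⟩
    rw [Fin.sum_univ_castSucc]
    simp only [Fin.snoc_castSucc, Fin.snoc_last, one_mul]
    rw [← hb, Fin.sum_univ_castSucc, Fin.sum_univ_castSucc]
    simp only [hd]
    ring
  rcases h _ hrow with ⟨c, hc⟩
  rcases hc with ⟨e, he⟩
  simp only [Fin.snoc_castSucc, Fin.snoc_last] at he
  refine ⟨Fin.snoc (fun i : Fin m => c i * b L) 0,
    Fin.snoc (fun i : Fin m => e i) (∑ i : Fin m, e i * (c i * b J)), ?_⟩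
  rw [Fin.sum_univ_castSucc]
  simp only [Fin.snoc_castSucc, Fin.snoc_last]
  rw [← he, Finset.sum_mul, ← Finset.sum_add_distrib]
  have hcast : ∀ i : Fin m, (i.castSucc : Fin (m+1)).castSucc = i.castSucc.castSucc := by
    intro i; rfl
  have hlast : ((Fin.last m : Fin (m+1)).castSucc : Fin (m+2)) = J := rfl
  rw [hlast]
  apply Finset.sum_congr rfl
  intro i _
  rw [hcast i]
  simp only [hd]
  ring

lemma satSR_mono {m l : ℕ} (h : SatSR R m) (hml : m ≤ l) : SatSR R l := by
  induction l, hml using Nat.le_induction with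
  | base => exact h
  | succ l hml ih => exact satSR_succ ih

/-- workhorse: add multiples of one extra element to a finite family to make it spanning -/
lemma SRstep {m : ℕ} (hS : SatSR R m) {ι : Type} [Fintype ι] [DecidableEq ι]
    (hcard : m ≤ Fintype.card ι) (f : ι → R) (x : R)
    (hspan : Ideal.span (Set.range f ∪ {x}) = ⊤) :
    ∃ t : ι → R, Ideal.span (Set.range fun i => f i + t i * x) = ⊤ := by
  set l := Fintype.card ι with hl
  have e : ι ≃ Fin l := Fintype.equivFin ι
  have hSl : SatSR R l := satSR_mono hS hcard
  set V : Fin (l + 1) → R := Fin.snoc (f ∘ e.symm) x with hV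
  have hVrange : Set.range V = Set.range f ∪ {x} := by
    ext r
    constructor
    · rintro ⟨j, rfl⟩
      refine Fin.lastCases ?_ ?_ j
      · right; simp [hV]
      · intro j; left; exact ⟨e.symm j, by simp [hV]⟩
    · rintro (⟨i, rfl⟩ | rfl)
      · exact ⟨(e i).castSucc, by simp [hV]⟩
      · exact ⟨Fin.last l, by simp [hV]⟩
  have hVu : IsUnimodularVec V := by
    rcases (span_range_eq_top_iff V).1 (by rw [hVrange]; exact hspan) with ⟨c, hc⟩
    exact ⟨c, hc⟩
  rcases hSl V hVu with ⟨t, ht⟩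
  refine ⟨fun i => t (e i), ?_⟩
  rcases ht with ⟨c, hc⟩
  rw [span_range_eq_top_iff]
  refine ⟨fun i => c (e i), ?_⟩
  rw [← hc]
  rw [← Equiv.sum_comp e (fun j => c j * (V j.castSucc + t j * V (Fin.last l)))]
  apply Finset.sum_congr rfl
  intro i _
  simp [hV]

section trans

lemma hB_sub_left {n} (u v w : BV n R) : hB (u - v) w = hB u w - hB v w := by
  have : u - v = u + (-1 : R) • v := by funext i; simp [sub_eq_add_neg]
  rw [this, hB_add_left, hB_smul_left]; ring

lemma hB_sub_right' {n} (u v w : BV n R) : hB u (v - w) = hB u v - hB u w := by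
  have : v - w = v + (-1 : R) • w := by funext i; simp [sub_eq_add_neg]
  rw [this, hB_add_right, hB_smul_right]; ring

/-- Eichler transformation: `v ↦ v + h(v,u)w + h(v,w)u`, where `h(u,w) = 0`. -/
def eichler {n : ℕ} (u w : BV n R) (huw : hB u w = 0) : (BV n R) ≃ₗ[R] (BV n R) where
  toFun v := v + hB v u • w + hB v w • u
  invFun v := v - hB v u • w - hB v w • u
  map_add' a b := by
    simp only [hB_add_left, add_smul]
    abel
  map_smul' r a := by
    simp only [hB_smul_left, RingHom.id_apply, smul_add, mul_smul]
  left_inv v := by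
    have hww : hB w w = 0 := hB_self w
    have huu : hB u u = 0 := hB_self u
    have hwu : hB w u = 0 := by rw [hB_skew, huw]; ring
    simp only [hB_add_left, hB_smul_left, huw, hwu, huu, hww, mul_zero, add_zero]
    abel
  right_inv v := by
    have hww : hB w w = 0 := hB_self w
    have huu : hB u u = 0 := hB_self u
    have hwu : hB w u = 0 := by rw [hB_skew, huw]; ring
    simp only [hB_sub_left, hB_smul_left, huw, hwu, huu, hww, mul_zero, sub_zero]
    abel

lemma eichler_apply {n : ℕ} (u w : BV n R) (huw : hB u w = 0) (v : BV n R) :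
    eichler u w huw v = v + hB v u • w + hB v w • u := rfl

lemma eichler_pres {n : ℕ} (u w : BV n R) (huw : hB u w = 0) (x y : BV n R) :
    hB (eichler u w huw x) (eichler u w huw y) = hB x y := by
  have hwu : hB w u = 0 := by rw [hB_skew, huw]; ring
  simp only [eichler_apply, hB_add_left, hB_add_right, hB_smul_left, hB_smul_right,
    hB_self, huw, hwu]
  rw [hB_skew x w, hB_skew x u, hB_skew y w, hB_skew y u]
  ring

lemma eichler_fix {n : ℕ} (u w : BV n R) (huw : hB u w = 0) (v : BV n R)
    (h1 : hB v u = 0) (h2 : hB v w = 0) : eichler u w huw v = v := by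
  rw [eichler_apply, h1, h2]
  simp

/-- symplectic transvection `v ↦ v + r h(v,u) u` -/
def transv {n : ℕ} (u : BV n R) (r : R) : (BV n R) ≃ₗ[R] (BV n R) where
  toFun v := v + (r * hB v u) • u
  invFun v := v - (r * hB v u) • u
  map_add' a b := by
    simp only [hB_add_left]
    funext i
    simp only [Pi.add_apply, Pi.smul_apply]
    rw [mul_add, add_smul]
    abel
  map_smul' c a := by
    simp only [hB_smul_left, RingHom.id_apply, smul_add]
    funext i
    simp only [Pi.add_apply, Pi.smul_apply]
    rw [show r * (c * hB a u) = c * (r * hB a u) by ring, mul_smul]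
  left_inv v := by
    have huu : hB u u = 0 := hB_self u
    simp only [hB_add_left, hB_smul_left, huu, mul_zero, add_zero]
    abel
  right_inv v := by
    have huu : hB u u = 0 := hB_self u
    simp only [hB_sub_left, hB_smul_left, huu, mul_zero, sub_zero]
    abel

lemma transv_apply {n : ℕ} (u : BV n R) (r : R) (v : BV n R) :
    transv u r v = v + (r * hB v u) • u := rfl

lemma transv_pres {n : ℕ} (u : BV n R) (r : R) (x y : BV n R) :
    hB (transv u r x) (transv u r y) = hB x y := by
  simp only [transv_apply, hB_add_left, hB_add_right, hB_smul_left, hB_smul_right, hB_self]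
  rw [hB_skew x u, hB_skew y u]
  ring

lemma transv_fix {n : ℕ} (u : BV n R) (r : R) (v : BV n R) (h1 : hB v u = 0) :
    transv u r v = v := by
  rw [transv_apply, h1]
  simp

/-- the key "hop": if `h(x,y) = 1` then a single transvection maps `x` to `y`. -/
lemma transv_hop {n : ℕ} (x y : BV n R) (hxy : hB x y = 1) :
    transv (x - y) 1 x = y := by
  rw [transv_apply]
  have h : hB x (x - y) = -1 := by
    rw [hB_sub_right', hB_self, hxy]; ring
  rw [h]
  funext i
  simp only [Pi.add_apply, Pi.smul_apply, Pi.sub_apply]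
  rw [one_mul]
  simp only [neg_smul, one_smul]
  abel

/-- block swap -/
def bswap {n : ℕ} (p q : Fin n) : (BV n R) ≃ₗ[R] (BV n R) :=
  LinearEquiv.funCongrLeft R (R × R) (Equiv.swap p q)

lemma bswap_apply {n : ℕ} (p q : Fin n) (v : BV n R) (i : Fin n) :
    bswap p q v i = v (Equiv.swap p q i) := rfl

lemma bswap_pres {n : ℕ} (p q : Fin n) (x y : BV n R) :
    hB (bswap p q x) (bswap p q y) = hB x y := by
  simp only [hB, bswap_apply]
  exact Fintype.sum_equiv (Equiv.swap p q) _ _ (fun i => rfl)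

end trans

/-- coordinates of `v` over a set of blocks -/
def cset {n : ℕ} (v : BV n R) (s : Set (Fin n)) : Set R :=
  {r | ∃ i ∈ s, r = (v i).1 ∨ r = (v i).2}

lemma cset_congr {n : ℕ} (v w : BV n R) (s : Set (Fin n)) (h : ∀ i ∈ s, v i = w i) :
    cset v s = cset w s := by
  unfold cset
  ext r
  constructor
  · rintro ⟨i, hi, hr⟩; exact ⟨i, hi, by rw [← h i hi]; exact hr⟩
  · rintro ⟨i, hi, hr⟩; exact ⟨i, hi, by rw [h i hi]; exact hr⟩

def bvOf {n : ℕ} (T : Finset (Fin n)) (c : {i // i ∈ T} × Bool → R) : BV n R :=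
  fun i => if h : i ∈ T then (c (⟨i, h⟩, true), c (⟨i, h⟩, false)) else 0

lemma bvOf_supp {n : ℕ} (T : Finset (Fin n)) (c : {i // i ∈ T} × Bool → R) (i : Fin n)
    (h : i ∉ T) : bvOf T c i = 0 := by simp [bvOf, h]

lemma bvOf_mem {n : ℕ} (T : Finset (Fin n)) (c : {i // i ∈ T} × Bool → R) (i : Fin n)
    (h : i ∈ T) : bvOf T c i = (c (⟨i, h⟩, true), c (⟨i, h⟩, false)) := by simp [bvOf, h]

/-- the coordinate family over a finset, as a function on a subtype -/
def coFam {n : ℕ} (v : BV n R) (T : Finset (Fin n)) : {i // i ∈ T} × Bool → R :=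
  fun p => if p.2 then (v p.1.1).1 else (v p.1.1).2

lemma range_coFam {n : ℕ} (v : BV n R) (T : Finset (Fin n)) :
    Set.range (coFam v T) = cset v ↑T := by
  ext r
  constructor
  · rintro ⟨⟨i, b⟩, rfl⟩
    cases b
    · exact ⟨i.1, i.2, Or.inr rfl⟩
    · exact ⟨i.1, i.2, Or.inl rfl⟩
  · rintro ⟨i, hi, (rfl | rfl)⟩
    · exact ⟨(⟨i, hi⟩, true), rfl⟩
    · exact ⟨(⟨i, hi⟩, false), rfl⟩

lemma hB_bvOf {n : ℕ} (v : BV n R) (T : Finset (Fin n)) (c : {i // i ∈ T} × Bool → R) :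
    hB v (bvOf T c) =
      ∑ i ∈ T.attach, ((v i.1).1 * c (i, false) - (v i.1).2 * c (i, true)) := by
  rw [hB]
  rw [show (Finset.univ : Finset (Fin n)) = Finset.univ from rfl]
  rw [← Finset.sum_subset (Finset.subset_univ T)
    (by intro i _ hi; rw [bvOf_supp T c i hi]; simp)]
  rw [← Finset.sum_attach T (fun i => ((v i).1 * (bvOf T c i).2 - (v i).2 * (bvOf T c i).1))]
  apply Finset.sum_congr rfl
  intro i _
  rw [bvOf_mem T c i.1 i.2]

lemma card_subBool {n : ℕ} (T : Finset (Fin n)) :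
    Fintype.card ({i // i ∈ T} × Bool) = 2 * T.card := by
  simp [Fintype.card_prod, Fintype.card_coe]
  ring

lemma sum_prodBool {ι : Type} [Fintype ι] (f : ι × Bool → R) :
    ∑ p : ι × Bool, f p = ∑ i : ι, (f (i, true) + f (i, false)) := by
  rw [Fintype.sum_prod_type]
  apply Finset.sum_congr rfl
  intro i _
  simp [Fintype.sum_bool]

/-- transvection-transitivity on unimodular vectors supported in a set of ≥ m+1 blocks -/
lemma transit {m n : ℕ} (hS : SatSR R m) (hm : 1 ≤ m) (s : Finset (Fin n))
    (hcard : m + 1 ≤ s.card) (i₀ : Fin n) (hi₀ : i₀ ∈ s) (z : BV n R)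
    (hsupp : ∀ i, i ∉ s → z i = 0) (humod : Ideal.span (cset z ↑s) = ⊤) :
    ∃ g : (BV n R) ≃ₗ[R] (BV n R), (∀ x y, hB (g x) (g y) = hB x y) ∧
      (∀ v : BV n R, (∀ i ∈ s, v i = 0) → g v = v) ∧ g z = Xb i₀ := by
  classical
  -- pick a spare block J
  have hne : (s.erase i₀).Nonempty := by
    rw [← Finset.card_pos, Finset.card_erase_of_mem hi₀]
    omega
  obtain ⟨J, hJ⟩ := hne
  have hJs : J ∈ s := Finset.mem_of_mem_erase hJ
  have hJi₀ : J ≠ i₀ := Finset.ne_of_mem_erase hJ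
  set T : Finset (Fin n) := s.erase J with hT
  have hTcard : T.card = s.card - 1 := Finset.card_erase_of_mem hJs
  have hJT : J ∉ T := Finset.notMem_erase J s
  have hTs : ∀ i, i ∈ T → i ∈ s := fun i hi => Finset.mem_of_mem_erase hi
  have hi₀T : i₀ ∈ T := Finset.mem_erase.2 ⟨Ne.symm hJi₀, hi₀⟩
  -- STEP 1 : stable range on (coords on T, b_J) with pivot a_J
  set x₁ : R := (z J).1 with hx₁
  have hcard₁ : m ≤ Fintype.card (({i // i ∈ T} × Bool) ⊕ Unit) := by
    rw [Fintype.card_sum, card_subBool]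
    simp only [Fintype.card_unit]
    omega
  set f₁ : (({i // i ∈ T} × Bool) ⊕ Unit) → R := Sum.elim (coFam z T) (fun _ => (z J).2)
    with hf₁
  have hspan₁ : Ideal.span (Set.range f₁ ∪ {x₁}) = ⊤ := by
    rw [eq_top_iff, ← humod]
    apply Ideal.span_mono
    rintro r ⟨i, hi, hr⟩
    by_cases hiJ : i = J
    · subst hiJ
      rcases hr with rfl | rfl
      · exact Or.inr rfl
      · exact Or.inl ⟨Sum.inr (), rfl⟩
    · have hiT : i ∈ T := Finset.mem_erase.2 ⟨hiJ, hi⟩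
      rcases hr with rfl | rfl
      · exact Or.inl ⟨Sum.inl (⟨i, hiT⟩, true), rfl⟩
      · exact Or.inl ⟨Sum.inl (⟨i, hiT⟩, false), rfl⟩
  obtain ⟨t₁, ht₁⟩ := SRstep hS hcard₁ f₁ x₁ hspan₁
  set w₁ : BV n R := bvOf T (fun p => t₁ (Sum.inl p)) with hw₁
  set tstar : R := t₁ (Sum.inr ()) with htstar
  have huw₁ : hB (Yb J) w₁ = 0 := by
    rw [hB_Yb_left, hw₁, bvOf_supp T _ J hJT]
    simp
  set g₁ := eichler (Yb J) w₁ huw₁ with hg₁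
  set δ : R := hB z w₁ with hδ
  set z₁ : BV n R := z + x₁ • w₁ + δ • Yb J with hz₁def
  have e₁ : g₁ z = z₁ := by
    rw [hg₁, eichler_apply, hB_Yb_right, hz₁def, ← hx₁, ← hδ]
  have hz₁T : ∀ i, i ∈ T → z₁ i = z i + x₁ • w₁ i := by
    intro i hi
    have hiJ : i ≠ J := fun h => hJT (h ▸ hi)
    simp [hz₁def, Yb_apply_ne hiJ]
  have hz₁J : z₁ J = (x₁, (z J).2 + δ) := by
    rw [hz₁def]
    simp [hw₁, bvOf_supp T _ J hJT, Prod.ext_iff, hx₁]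
  have hz₁supp : ∀ i, i ∉ s → z₁ i = 0 := by
    intro i hi
    have hiT : i ∉ T := fun h => hi (hTs i h)
    have hiJ : i ≠ J := fun h => hi (h ▸ hJs)
    simp [hz₁def, hw₁, hsupp i hi, bvOf_supp T _ i hiT, Yb_apply_ne hiJ]
  have hcoFam₁ : ∀ p : {i // i ∈ T} × Bool,
      coFam z₁ T p = f₁ (Sum.inl p) + t₁ (Sum.inl p) * x₁ := by
    rintro ⟨⟨i, hi⟩, b⟩
    have hh := hz₁T i hi
    cases b <;>
      simp [coFam, hh, hf₁, hw₁, bvOf_mem T _ i hi, mul_comm]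
  set βmid : R := (z J).2 + tstar * x₁ with hβmid
  have cert₁ : Ideal.span (cset z₁ ↑T ∪ {βmid}) = ⊤ := by
    rw [eq_top_iff, ← ht₁]
    apply Ideal.span_mono
    rintro r ⟨q, rfl⟩
    rcases q with p | u
    · refine Or.inl ?_
      rw [← range_coFam z₁ T]
      exact ⟨p, hcoFam₁ p⟩
    · exact Or.inr rfl
  -- δ decomposition
  have hδmem : δ ∈ Ideal.span (insert x₁ (cset z₁ ↑T)) := by
    have h1 : δ ∈ Ideal.span (cset z ↑T) :=
      hB_mem_span z w₁ ↑T (fun i hi => bvOf_supp T _ i hi)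
    refine (Ideal.span_le.2 ?_) h1
    rintro r ⟨i, hi, hr⟩
    have hiT : i ∈ T := hi
    have hco := hz₁T i hiT
    rcases hr with rfl | rfl
    · refine Ideal.mem_span_insert.2 ⟨-(w₁ i).1, (z₁ i).1,
        Ideal.subset_span ⟨i, hiT, Or.inl rfl⟩, ?_⟩
      have hx : (z₁ i).1 = (z i).1 + x₁ * (w₁ i).1 := by rw [hco]; simp
      rw [hx]; ring
    · refine Ideal.mem_span_insert.2 ⟨-(w₁ i).2, (z₁ i).2,
        Ideal.subset_span ⟨i, hiT, Or.inr rfl⟩, ?_⟩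
      have hx : (z₁ i).2 = (z i).2 + x₁ * (w₁ i).2 := by rw [hco]; simp
      rw [hx]; ring
  obtain ⟨lam, γ, hγ, hδeq⟩ := Ideal.mem_span_insert.1 hδmem
  -- STEP 1.5 : transvection fixing the b_J entry
  set g₂ := transv (Yb J) (tstar - lam) with hg₂
  set z₂ : BV n R := z₁ + ((tstar - lam) * x₁) • Yb J with hz₂def
  have e₂ : g₂ z₁ = z₂ := by
    rw [hg₂, transv_apply, hB_Yb_right, hz₁J, hz₂def]
  have hz₂T : ∀ i ∈ (↑T : Set (Fin n)), z₂ i = z₁ i := by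
    intro i hi
    have hiT : i ∈ T := hi
    have hiJ : i ≠ J := fun h => hJT (h ▸ hiT)
    simp [hz₂def, Yb_apply_ne hiJ]
  have hcsets : cset z₂ ↑T = cset z₁ ↑T := cset_congr z₂ z₁ ↑T hz₂T
  set β : R := (z₂ J).2 with hβ
  have hz₂J1 : (z₂ J).1 = x₁ := by
    simp [hz₂def, hz₁J]
  have hββ : β = βmid + γ := by
    have hcc : (z₂ J).2 = (z J).2 + δ + (tstar - lam) * x₁ := by
      simp [hz₂def, hz₁J]
    rw [hβ, hcc, hδeq, hβmid]; ring
  have hz₂supp : ∀ i, i ∉ s → z₂ i = 0 := by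
    intro i hi
    have hiJ : i ≠ J := fun h => hi (h ▸ hJs)
    simp [hz₂def, hz₁supp i hi, Yb_apply_ne hiJ]
  have cert₂ : Ideal.span (cset z₂ ↑T ∪ {β}) = ⊤ := by
    rw [eq_top_iff, ← cert₁]
    rw [Ideal.span_le]
    rintro r (hr | rfl)
    · exact Ideal.subset_span (Or.inl (hcsets ▸ hr))
    · have hγ' : γ ∈ Ideal.span (cset z₂ ↑T ∪ {β}) := by
        refine (Ideal.span_le.2 ?_) (hcsets ▸ hγ)
        intro q hq
        exact Ideal.subset_span (Or.inl hq)
      have hβm : β ∈ Ideal.span (cset z₂ ↑T ∪ {β}) :=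
        Ideal.subset_span (Or.inr rfl)
      have hbm : βmid = β - γ := by rw [hββ]; ring
      rw [hbm]
      exact sub_mem hβm hγ'
  -- STEP 2 : stable range with pivot β = b_J
  have hcard₂ : m ≤ Fintype.card ({i // i ∈ T} × Bool) := by
    rw [card_subBool]; omega
  have hspan₂ : Ideal.span (Set.range (coFam z₂ T) ∪ {β}) = ⊤ := by
    rw [range_coFam]; exact cert₂
  obtain ⟨t₂, ht₂⟩ := SRstep hS hcard₂ (coFam z₂ T) β hspan₂
  set w₂ : BV n R := bvOf T (fun p => - t₂ p) with hw₂
  have huw₂ : hB (Xb J) w₂ = 0 := by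
    rw [hB_Xb_left, hw₂, bvOf_supp T _ J hJT]
    simp
  set g₃ := eichler (Xb J) w₂ huw₂ with hg₃
  set z₃ : BV n R := z₂ + (-β) • w₂ + hB z₂ w₂ • Xb J with hz₃def
  have e₃ : g₃ z₂ = z₃ := by
    rw [hg₃, eichler_apply, hB_Xb_right, hz₃def, ← hβ]
  have hz₃T : ∀ i, i ∈ T → z₃ i = z₂ i + (-β) • w₂ i := by
    intro i hi
    have hiJ : i ≠ J := fun h => hJT (h ▸ hi)
    simp [hz₃def, Xb_apply_ne hiJ]
  have hz₃supp : ∀ i, i ∉ s → z₃ i = 0 := by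
    intro i hi
    have hiT : i ∉ T := fun h => hi (hTs i h)
    have hiJ : i ≠ J := fun h => hi (h ▸ hJs)
    simp [hz₃def, hw₂, hz₂supp i hi, bvOf_supp T _ i hiT, Xb_apply_ne hiJ]
  have humod₃ : Ideal.span (cset z₃ ↑T) = ⊤ := by
    rw [eq_top_iff, ← ht₂, Ideal.span_le]
    rintro r ⟨p, rfl⟩
    apply Ideal.subset_span
    rcases p with ⟨⟨i, hi⟩, b⟩
    have hco := hz₃T i hi
    refine ⟨i, hi, ?_⟩
    cases b
    · refine Or.inr ?_
      rw [hco]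
      simp [coFam, hw₂, bvOf_mem T _ i hi]
      ring
    · refine Or.inl ?_
      rw [hco]
      simp [coFam, hw₂, bvOf_mem T _ i hi]
      ring
  -- PHASE B : three transvection hops
  obtain ⟨c, hc⟩ := (span_range_eq_top_iff (coFam z₃ T)).1 (by rw [range_coFam]; exact humod₃)
  set w₄ : BV n R := bvOf T (fun p => if p.2 then - c (p.1, false) else c (p.1, true)) with hw₄
  have hw₄supp : ∀ i, i ∉ T → w₄ i = 0 := fun i hi => bvOf_supp T _ i hi
  have hw₄supps : ∀ i, i ∉ s → w₄ i = 0 := fun i hi => hw₄supp i (fun h => hi (hTs i h))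
  have hzw₄ : hB z₃ w₄ = 1 := by
    rw [hw₄, hB_bvOf]
    rw [← hc, sum_prodBool (fun p => c p * coFam z₃ T p)]
    rw [Finset.univ_eq_attach]
    apply Finset.sum_congr rfl
    intro i _
    simp only [coFam, if_true, if_false, Bool.false_eq_true]
    ring
  set τ₁ := transv (z₃ - w₄) 1 with hτ₁
  have eτ₁ : τ₁ z₃ = w₄ := transv_hop z₃ w₄ hzw₄
  -- u_K with h(w₄, u_K) = 1 and vanishing J block
  set uK : BV n R := (z₃ J).1 • Xb J + (z₃ J).2 • Yb J - z₃ with huK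
  have huKJ : uK J = 0 := by
    rw [huK]
    have hval : (((z₃ J).1 • Xb J + (z₃ J).2 • Yb J : BV n R)) J = z₃ J := by
      simp [Xb, Yb, Prod.ext_iff]
    simp only [Pi.sub_apply, hval, sub_self]
  have huKsupp : ∀ i, i ∉ s → uK i = 0 := by
    intro i hi
    have hiJ : i ≠ J := fun h => hi (h ▸ hJs)
    simp [huK, hz₃supp i hi, Xb_apply_ne hiJ, Yb_apply_ne hiJ]
  have hw₄J : w₄ J = 0 := hw₄supp J hJT
  have hw₄uK : hB w₄ uK = 1 := by
    rw [huK, hB_sub_right', hB_add_right, hB_smul_right, hB_smul_right,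
      hB_Xb_right, hB_Yb_right, hw₄J]
    rw [hB_skew w₄ z₃, hzw₄]
    simp
  set u : BV n R := uK - Yb J with hu
  have husupp : ∀ i, i ∉ s → u i = 0 := by
    intro i hi
    have hiJ : i ≠ J := fun h => hi (h ▸ hJs)
    simp [hu, huKsupp i hi, Yb_apply_ne hiJ]
  have hw₄u : hB w₄ u = 1 := by
    rw [hu, hB_sub_right', hw₄uK, hB_Yb_right, hw₄J]
    simp
  set τ₂ := transv (w₄ - u) 1 with hτ₂
  have eτ₂ : τ₂ w₄ = u := transv_hop w₄ u hw₄u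
  have huX : hB u (Xb J) = 1 := by
    rw [hu, hB_sub_left, hB_Xb_right, hB_Xb_right, huKJ]
    simp
  set τ₃ := transv (u - Xb J) 1 with hτ₃
  have eτ₃ : τ₃ u = Xb J := transv_hop u (Xb J) huX
  set g₅ := (bswap J i₀ : (BV n R) ≃ₗ[R] (BV n R)) with hg₅
  have eg₅ : g₅ (Xb J) = Xb i₀ := by
    funext i
    rw [hg₅, bswap_apply]
    by_cases h1 : i = i₀
    · subst h1
      rw [Equiv.swap_apply_right]
      simp [Xb]
    · by_cases h2 : i = J
      · subst h2
        rw [Equiv.swap_apply_left]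
        rw [Xb_apply_ne (Ne.symm hJi₀), Xb_apply_ne hJi₀]
      · rw [Equiv.swap_apply_of_ne_of_ne h2 h1]
        rw [Xb_apply_ne h2, Xb_apply_ne h1]
  -- assemble
  refine ⟨g₁.trans (g₂.trans (g₃.trans (τ₁.trans (τ₂.trans (τ₃.trans g₅))))), ?_, ?_, ?_⟩
  · intro x y
    simp only [LinearEquiv.trans_apply]
    rw [bswap_pres, transv_pres, transv_pres, transv_pres, eichler_pres,
      transv_pres, eichler_pres]
  · intro v hv
    have horth : ∀ w : BV n R, (∀ i, i ∉ s → w i = 0) → hB v w = 0 := by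
      intro w hw
      apply hB_orth
      intro i
      by_cases hi : i ∈ s
      · exact Or.inl (hv i hi)
      · exact Or.inr (hw i hi)
    have hYJ : ∀ i, i ∉ s → Yb (R := R) J i = 0 := by
      intro i hi; exact Yb_apply_ne (fun h => hi (h ▸ hJs))
    have hXJ : ∀ i, i ∉ s → Xb (R := R) J i = 0 := by
      intro i hi; exact Xb_apply_ne (fun h => hi (h ▸ hJs))
    have hw₁s : ∀ i, i ∉ s → w₁ i = 0 := by
      intro i hi; exact bvOf_supp T _ i (fun h => hi (hTs i h))
    have hw₂s : ∀ i, i ∉ s → w₂ i = 0 := by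
      intro i hi; exact bvOf_supp T _ i (fun h => hi (hTs i h))
    have hsub : ∀ a b : BV n R, (∀ i, i ∉ s → a i = 0) → (∀ i, i ∉ s → b i = 0) →
        (∀ i, i ∉ s → (a - b) i = 0) := by
      intro a b ha hb i hi
      simp [ha i hi, hb i hi]
    simp only [LinearEquiv.trans_apply]
    rw [hg₁, eichler_fix _ _ _ v (horth _ hYJ) (horth _ hw₁s),
      hg₂, transv_fix _ _ v (horth _ hYJ),
      hg₃, eichler_fix _ _ _ v (horth _ hXJ) (horth _ hw₂s),
      hτ₁, transv_fix _ _ v (horth _ (hsub _ _ hz₃supp hw₄supps)),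
      hτ₂, transv_fix _ _ v (horth _ (hsub _ _ hw₄supps husupp)),
      hτ₃, transv_fix _ _ v (horth _ (hsub _ _ husupp hXJ))]
    funext i
    rw [hg₅, bswap_apply]
    by_cases h1 : i = i₀
    · rw [h1, Equiv.swap_apply_right, hv J hJs, hv i₀ hi₀]
    · by_cases h2 : i = J
      · rw [h2, Equiv.swap_apply_left, hv J hJs, hv i₀ hi₀]
      · rw [Equiv.swap_apply_of_ne_of_ne h2 h1]
  · simp only [LinearEquiv.trans_apply]
    rw [e₁, e₂, e₃, eτ₁, eτ₂, eτ₃, eg₅]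

/-! ### the iteration making the W-part unimodular -/

/-- truncation to the first `q` blocks -/
def ppart {n : ℕ} (q : ℕ) (v : BV n R) : BV n R := fun i => if i.1 < q then v i else 0

/-- the Finset of blocks `≥ q` -/
def Wf (q n : ℕ) : Finset (Fin n) := Finset.univ.filter (fun i => q ≤ i.1)

lemma mem_Wf {q n : ℕ} (i : Fin n) : i ∈ Wf q n ↔ q ≤ i.1 := by
  simp [Wf]

lemma card_Wf_ge {m q n : ℕ} (h : m + q + 1 ≤ n) : m + 1 ≤ (Wf q n).card := by
  classical
  have hinj : Function.Injective (fun j : Fin (m + 1) => (⟨q + j.1, by omega⟩ : Fin n)) := by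
    intro a b hab
    have := congrArg Fin.val hab
    simp at this
    exact Fin.ext this
  have himg : (Finset.univ.image (fun j : Fin (m + 1) => (⟨q + j.1, by omega⟩ : Fin n)))
      ⊆ Wf q n := by
    intro i hi
    rcases Finset.mem_image.1 hi with ⟨j, _, rfl⟩
    rw [mem_Wf]
    simp
  calc m + 1 = Fintype.card (Fin (m + 1)) := by simp
    _ = (Finset.univ.image (fun j : Fin (m + 1) => (⟨q + j.1, by omega⟩ : Fin n))).card := by
        rw [Finset.card_image_of_injective _ hinj]; simp
    _ ≤ (Wf q n).card := Finset.card_le_card himg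

lemma hB_ppart {n q : ℕ} (vf u : BV n R) (hu : ∀ i : Fin n, q ≤ i.1 → u i = 0) :
    hB vf u = hB (ppart q vf) u := by
  apply Finset.sum_congr rfl
  intro i _
  by_cases hi : i.1 < q
  · simp [ppart, hi]
  · rw [hu i (by omega)]
    simp

lemma ppart_supp {n q : ℕ} (vf : BV n R) (i : Fin n) (hi : q ≤ i.1) : ppart q vf i = 0 := by
  unfold ppart
  rw [if_neg (by omega)]

/-- iteration: absorb the auxiliary `D`-scalars into the W-part of `vf` -/
lemma iterlem {m n q : ℕ} (hS : SatSR R m) (hq : m + q + 1 ≤ n) :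
    ∀ (s : ℕ) (us : Fin s → BV n R) (vf : BV n R),
    (∀ j (i : Fin n), q ≤ i.1 → us j i = 0) →
    Ideal.span (cset vf ↑(Wf q n) ∪ Set.range (fun j => hB (ppart q vf) (us j))) = ⊤ →
    ∃ g : (BV n R) ≃ₗ[R] (BV n R), (∀ x y, hB (g x) (g y) = hB x y) ∧
      (∀ v : BV n R, (∀ j, hB v (us j) = 0) → (∀ i : Fin n, q ≤ i.1 → v i = 0) → g v = v) ∧
      Ideal.span (cset (g vf) ↑(Wf q n)) = ⊤ := by
  classical
  intro s
  induction s with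
  | zero =>
    intro us vf hussupp hinv
    refine ⟨LinearEquiv.refl R (BV n R), by simp [LinearEquiv.refl_apply], by simp, ?_⟩
    simpa using hinv
  | succ s IH =>
    intro us vf hussupp hinv
    set usl := us (Fin.last s) with husl
    set x : R := hB (ppart q vf) usl with hx
    have hcard : m ≤ Fintype.card (({i // i ∈ Wf q n} × Bool) ⊕ Fin s) := by
      rw [Fintype.card_sum, card_subBool, Fintype.card_fin]
      have := card_Wf_ge (m := m) (q := q) (n := n) hq
      omega
    set f : (({i // i ∈ Wf q n} × Bool) ⊕ Fin s) → R :=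
      Sum.elim (coFam vf (Wf q n)) (fun j => hB (ppart q vf) (us j.castSucc)) with hf
    have hspan : Ideal.span (Set.range f ∪ {x}) = ⊤ := by
      rw [eq_top_iff, ← hinv]
      apply Ideal.span_mono
      rintro r (hr | ⟨j, rfl⟩)
      · rw [← range_coFam vf (Wf q n)] at hr
        rcases hr with ⟨p, rfl⟩
        exact Or.inl ⟨Sum.inl p, rfl⟩
      · refine Fin.lastCases ?_ ?_ j
        · exact Or.inr rfl
        · intro j'
          exact Or.inl ⟨Sum.inr j', rfl⟩
    obtain ⟨t, ht⟩ := SRstep hS hcard f x hspan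
    set w : BV n R := bvOf (Wf q n) (fun p => t (Sum.inl p)) with hw
    have hwsupp : ∀ i : Fin n, ¬ q ≤ i.1 → w i = 0 := by
      intro i hi
      exact bvOf_supp _ _ i (fun h => hi ((mem_Wf i).1 h))
    have huw : hB usl w = 0 := by
      apply hB_orth
      intro i
      by_cases hi : q ≤ i.1
      · exact Or.inl (hussupp (Fin.last s) i hi)
      · exact Or.inr (hwsupp i hi)
    set g₀ := eichler usl w huw with hg₀
    set lam : R := hB vf w with hlam
    set vf' : BV n R := vf + x • w + lam • usl with hvf'
    have e₀ : g₀ vf = vf' := by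
      rw [hg₀, eichler_apply, hvf', ← hlam]
      have : hB vf usl = x := by
        rw [hx, hB_ppart vf usl (hussupp (Fin.last s))]
      rw [this]
    set us' : Fin s → BV n R := fun j => us j.castSucc + t (Sum.inr j) • usl with hus'
    have hus'supp : ∀ j (i : Fin n), q ≤ i.1 → us' j i = 0 := by
      intro j i hi
      have h1 : us j.castSucc i = 0 := hussupp _ i hi
      have h2 : usl i = 0 := by rw [husl]; exact hussupp _ i hi
      simp [hus', h1, h2]
    -- coordinates of vf' on W
    have hvf'W : ∀ i : Fin n, q ≤ i.1 → vf' i = vf i + x • w i := by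
      intro i hi
      have h2 : usl i = 0 := by rw [husl]; exact hussupp _ i hi
      simp [hvf', h2]
    have hcoFam' : ∀ p : {i // i ∈ Wf q n} × Bool,
        coFam vf' (Wf q n) p = f (Sum.inl p) + t (Sum.inl p) * x := by
      rintro ⟨⟨i, hi⟩, b⟩
      have hiW : q ≤ i.1 := (mem_Wf i).1 hi
      have hv := hvf'W i hiW
      cases b <;>
        simp [coFam, hv, hf, hw, bvOf_mem _ _ i hi, mul_comm]
    -- p-part of vf'
    have hppart' : ppart q vf' = ppart q vf + lam • usl := by
      funext i
      by_cases hi : i.1 < q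
      · have hwi : w i = 0 := hwsupp i (by omega)
        simp [ppart, hvf', hi, hwi]
      · have hui : usl i = 0 := by rw [husl]; exact hussupp (Fin.last s) i (by omega)
        simp [ppart, hvf', hi, hui]
    -- lam lies in the span of W-coordinates of vf'
    have hlammem : lam ∈ Ideal.span (cset vf' ↑(Wf q n)) := by
      have : hB vf' w = lam := by
        rw [hvf', hB_add_left, hB_add_left, hB_smul_left, hB_smul_left, hB_self, huw, ← hlam]
        ring
      rw [← this]
      apply hB_mem_span
      intro i hi
      exact hwsupp i (fun h => hi ((mem_Wf i).2 h))
    have hinv' : Ideal.span (cset vf' ↑(Wf q n) ∪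
        Set.range (fun j => hB (ppart q vf') (us' j))) = ⊤ := by
      rw [eq_top_iff, ← ht, Ideal.span_le]
      rintro r ⟨p, rfl⟩
      rcases p with p | j
      · apply Ideal.subset_span
        refine Or.inl ?_
        rw [← range_coFam vf' (Wf q n)]
        exact ⟨p, hcoFam' p⟩
      · -- f (inr j) + t (inr j) * x = hB (ppart vf) (us' j)
        have h1 : f (Sum.inr j) + t (Sum.inr j) * x =
            hB (ppart q vf) (us' j) := by
          rw [hus']
          simp only [hf, Sum.elim_inr]
          rw [hB_add_right, hB_smul_right, ← hx]
        have h2 : hB (ppart q vf') (us' j) =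
            hB (ppart q vf) (us' j) + lam * hB usl (us' j) := by
          rw [hppart', hB_add_left, hB_smul_left]
        have h1' : (fun i => f i + t i * x) (Sum.inr j) = hB (ppart q vf) (us' j) := h1
        have h3 : hB (ppart q vf) (us' j) =
            hB (ppart q vf') (us' j) - lam * hB usl (us' j) := by
          rw [h2]; ring
        rw [h1', h3]
        apply sub_mem
        · exact Ideal.subset_span (Or.inr ⟨j, rfl⟩)
        · exact Ideal.mul_mem_right _ _
            ((Ideal.span_mono Set.subset_union_left) hlammem)
    obtain ⟨g', hg'pres, hg'fix, hg'span⟩ := IH us' vf' hus'supp hinv'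
    refine ⟨g₀.trans g', ?_, ?_, ?_⟩
    · intro a b
      simp only [LinearEquiv.trans_apply]
      rw [hg'pres, hg₀, eichler_pres]
    · intro v hvus hvW
      simp only [LinearEquiv.trans_apply]
      have hfix₀ : g₀ v = v := by
        rw [hg₀]
        apply eichler_fix
        · exact hvus (Fin.last s)
        · apply hB_orth
          intro i
          by_cases hi : q ≤ i.1
          · exact Or.inl (hvW i hi)
          · exact Or.inr (hwsupp i hi)
      rw [hfix₀]
      apply hg'fix _ _ hvW
      intro j
      rw [hus', hB_add_right, hB_smul_right, hvus j.castSucc, hvus (Fin.last s)]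
      ring
    · simp only [LinearEquiv.trans_apply]
      rw [e₀]
      exact hg'span

/-! ### the main induction -/

/-- the h-representative of a functional on the low blocks -/
def wdual {n : ℕ} (q : ℕ) (f : BV n R →ₗ[R] R) : BV n R :=
  ∑ i ∈ Finset.univ.filter (fun i : Fin n => i.1 < q),
    ((-(f (Yb i))) • Xb i + (f (Xb i)) • Yb i)

lemma wdual_supp {n q : ℕ} (f : BV n R →ₗ[R] R) (i : Fin n) (hi : q ≤ i.1) :
    wdual q f i = 0 := by
  unfold wdual
  rw [Finset.sum_apply]
  apply Finset.sum_eq_zero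
  intro j hj
  have hjq : j.1 < q := by simpa [Finset.mem_filter] using hj
  have hij : i ≠ j := by
    intro h
    rw [h] at hi
    omega
  simp [Xb_apply_ne hij, Yb_apply_ne hij]

lemma repfun {n q : ℕ} (f : BV n R →ₗ[R] R) (x : BV n R)
    (hx : ∀ i : Fin n, q ≤ i.1 → x i = 0) : hB x (wdual q f) = f x := by
  rw [wdual, hB_sum_right]
  have hexp := bv_expand x (Finset.univ.filter (fun i : Fin n => i.1 < q))
    (fun i hi => hx i (by simpa [Finset.mem_filter] using hi))
  conv_rhs => rw [hexp]
  rw [map_sum]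
  apply Finset.sum_congr rfl
  intro i _
  rw [hB_add_right, hB_smul_right, hB_smul_right, hB_Xb_right, hB_Yb_right,
    map_add, map_smul, map_smul]
  simp only [smul_eq_mul]
  ring

/-- main lemma: compress a frame into the span of the first `2k-1` basis vectors -/
lemma mainlem {m : ℕ} (hS : SatSR R m) (hm : 1 ≤ m) :
    ∀ (k : ℕ) {n : ℕ}, m + k ≤ n →
    ∀ (v : Fin k → BV n R) (gs : Fin k → (BV n R →ₗ[R] R)),
    (∀ l l', gs l (v l') = if l' = l then 1 else 0) →
    ∃ g : (BV n R) ≃ₗ[R] (BV n R), (∀ x y, hB (g x) (g y) = hB x y) ∧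
      ∀ l, (∀ i : Fin n, k ≤ i.1 → g (v l) i = 0) ∧
           (∀ i : Fin n, i.1 + 1 = k → (g (v l) i).2 = 0) := by
  intro k
  induction k with
  | zero =>
    intro n hn v gs hgs
    exact ⟨LinearEquiv.refl R (BV n R), by simp [LinearEquiv.refl_apply], fun l => l.elim0⟩
  | succ q IH =>
    intro n hn v gs hgs
    have hn' : m + q ≤ n := by omega
    have hgs' : ∀ l l' : Fin q, gs l.succ (v l'.succ) = if l' = l then 1 else 0 := by
      intro l l'
      rw [hgs]
      by_cases h : l' = l
      · simp [h]
      · rw [if_neg (fun hh => h (Fin.succ_inj.1 hh)), if_neg h]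
    obtain ⟨g₀, hg₀pres, hg₀supp⟩ := IH hn' (fun l => v l.succ) (fun l => gs l.succ) hgs'
    set vr : Fin q → BV n R := fun l => g₀ (v l.succ) with hvr
    set vf : BV n R := g₀ (v 0) with hvf
    have hvrsupp : ∀ l (i : Fin n), q ≤ i.1 → vr l i = 0 := by
      intro l i hi
      exact (hg₀supp l).1 i hi
    -- transported dual functionals
    set Gs : Fin (q + 1) → (BV n R →ₗ[R] R) :=
      fun l => (gs l).comp (g₀.symm : BV n R ≃ₗ[R] BV n R).toLinearMap with hGs
    have hGs0vf : Gs 0 vf = 1 := by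
      rw [hGs, hvf]
      simp only [LinearMap.comp_apply, LinearEquiv.coe_coe, LinearEquiv.symm_apply_apply]
      rw [hgs]
      simp
    have hGs0vr : ∀ a : Fin q, Gs 0 (vr a) = 0 := by
      intro a
      rw [hGs, hvr]
      simp only [LinearMap.comp_apply, LinearEquiv.coe_coe, LinearEquiv.symm_apply_apply]
      rw [hgs]
      rw [if_neg (Fin.succ_ne_zero a)]
    set ustar : BV n R := wdual q (Gs 0) with hustar
    have hustarsupp : ∀ i : Fin n, q ≤ i.1 → ustar i = 0 := fun i hi => wdual_supp _ i hi
    have hvrustar : ∀ a : Fin q, hB (vr a) ustar = 0 := by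
      intro a
      rw [hustar, repfun (Gs 0) (vr a) (hvrsupp a)]
      exact hGs0vr a
    -- the invariant for the iteration with the single auxiliary vector ustar
    have hinv : Ideal.span (cset vf ↑(Wf q n) ∪
        Set.range (fun _ : Fin 1 => hB (ppart q vf) ustar)) = ⊤ := by
      rw [Ideal.eq_top_iff_one]
      have hsplit : vf = ppart q vf + (vf - ppart q vf) := by ring
      have h1 : Gs 0 (ppart q vf) = hB (ppart q vf) ustar := by
        rw [hustar, repfun (Gs 0) _ (fun i hi => ppart_supp vf i hi)]
      have hzsupp : ∀ i : Fin n, i ∉ Wf q n → (vf - ppart q vf) i = 0 := by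
        intro i hi
        have hiq : i.1 < q := by
          by_contra hcon
          exact hi ((mem_Wf i).2 (by omega))
        simp [ppart, hiq]
      have h2 : Gs 0 (vf - ppart q vf) ∈ Ideal.span (cset vf ↑(Wf q n)) := by
        have hexp := bv_expand (vf - ppart q vf) (Wf q n) hzsupp
        rw [hexp, map_sum]
        apply Ideal.sum_mem
        intro i hiW
        have hval : (vf - ppart q vf) i = vf i := by
          have : ppart q vf i = 0 := ppart_supp vf i ((mem_Wf i).1 hiW)
          simp [this]
        rw [map_add, map_smul, map_smul, hval]
        apply add_mem
        · rw [smul_eq_mul, mul_comm]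
          exact Ideal.mul_mem_left _ _
            (Ideal.subset_span ⟨i, Finset.mem_coe.2 hiW, Or.inl rfl⟩)
        · rw [smul_eq_mul, mul_comm]
          exact Ideal.mul_mem_left _ _
            (Ideal.subset_span ⟨i, Finset.mem_coe.2 hiW, Or.inr rfl⟩)
      have hone : (1 : R) = hB (ppart q vf) ustar + Gs 0 (vf - ppart q vf) := by
        rw [← h1, ← map_add]
        rw [← hsplit, hGs0vf]
      rw [hone]
      apply add_mem
      · exact (Ideal.span_mono Set.subset_union_right)
          (Ideal.subset_span ⟨0, rfl⟩)
      · exact (Ideal.span_mono Set.subset_union_left) h2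
    obtain ⟨g₁, hg₁pres, hg₁fix, hg₁span⟩ :=
      iterlem hS (by omega) 1 (fun _ => ustar) vf (fun _ i hi => hustarsupp i hi) hinv
    have hg₁vr : ∀ a : Fin q, g₁ (vr a) = vr a := by
      intro a
      exact hg₁fix (vr a) (fun _ => hvrustar a) (hvrsupp a)
    -- transitivity on the W-part
    set vf1 : BV n R := g₁ vf with hvf1
    set z : BV n R := vf1 - ppart q vf1 with hz
    have hqn : q < n := by omega
    set i₀ : Fin n := ⟨q, hqn⟩ with hi₀def
    have hi₀W : i₀ ∈ Wf q n := (mem_Wf i₀).2 (le_refl q)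
    have hzsupp : ∀ i : Fin n, i ∉ Wf q n → z i = 0 := by
      intro i hi
      have hiq : i.1 < q := by
        by_contra hcon
        exact hi ((mem_Wf i).2 (by omega))
      simp [hz, ppart, hiq]
    have hzW : ∀ i ∈ (↑(Wf q n) : Set (Fin n)), z i = vf1 i := by
      intro i hi
      have : ppart q vf1 i = 0 := ppart_supp vf1 i ((mem_Wf i).1 hi)
      simp [hz, this]
    have hzumod : Ideal.span (cset z ↑(Wf q n)) = ⊤ := by
      rw [cset_congr z vf1 ↑(Wf q n) hzW]
      exact hg₁span
    obtain ⟨g₂, hg₂pres, hg₂fix, hg₂z⟩ :=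
      transit hS hm (Wf q n) (card_Wf_ge (by omega)) i₀ hi₀W z hzsupp hzumod
    -- assemble
    refine ⟨g₀.trans (g₁.trans g₂), ?_, ?_⟩
    · intro a b
      simp only [LinearEquiv.trans_apply]
      rw [hg₂pres, hg₁pres, hg₀pres]
    · intro l
      refine Fin.cases ?_ ?_ l
      · -- the first vector
        have hi₀val : i₀.1 = q := rfl
        have hgv : g₂ (g₁ (g₀ (v 0))) = ppart q vf1 + Xb i₀ := by
          have h4 : g₂ vf1 = g₂ (ppart q vf1) + g₂ z := by
            rw [← map_add]
            congr 1
            rw [hz]; ring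
          have h5 : g₂ (ppart q vf1) = ppart q vf1 :=
            hg₂fix _ (fun i hi => ppart_supp vf1 i ((mem_Wf i).1 hi))
          rw [← hvf, ← hvf1, h4, h5, hg₂z]
        simp only [LinearEquiv.trans_apply]
        rw [hgv]
        constructor
        · intro i hi
          have h1 : ppart q vf1 i = 0 := ppart_supp vf1 i (by omega)
          have h2 : Xb (R := R) i₀ i = 0 := by
            apply Xb_apply_ne
            intro h
            rw [h, hi₀val] at hi
            omega
          simp [h1, h2]
        · intro i hi
          have hii₀ : i = i₀ := Fin.ext (by rw [hi₀val]; omega)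
          rw [hii₀]
          simp [ppart_supp vf1 i₀ (le_of_eq hi₀val.symm)]
      · -- the tail vectors
        intro a
        have hgv : g₂ (g₁ (g₀ (v a.succ))) = vr a := by
          show g₂ (g₁ (vr a)) = vr a
          rw [hg₁vr a]
          exact hg₂fix _ (fun i hi => hvrsupp a i ((mem_Wf i).1 hi))
        simp only [LinearEquiv.trans_apply]
        rw [hgv]
        constructor
        · intro i hi
          exact hvrsupp a i (by omega)
        · intro i hi
          rw [hvrsupp a i (by omega)]
          rfl

/-! ### transport between `Fin (2n) → R` and the block model -/

def toBVfun {n : ℕ} (v : Fin (2 * n) → R) : BV n R :=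
  fun i => (v ⟨2 * i.1, by have := i.2; omega⟩, v ⟨2 * i.1 + 1, by have := i.2; omega⟩)

def ofBVfun {n : ℕ} (w : BV n R) : Fin (2 * n) → R :=
  fun j => if j.1 % 2 = 0 then (w ⟨j.1 / 2, by have := j.2; omega⟩).1
           else (w ⟨j.1 / 2, by have := j.2; omega⟩).2

def toBV {n : ℕ} : (Fin (2 * n) → R) ≃ₗ[R] BV n R where
  toFun := toBVfun
  invFun := ofBVfun
  map_add' a b := by
    funext i
    simp [toBVfun, Prod.ext_iff]
  map_smul' r a := by
    funext i
    simp [toBVfun, Prod.ext_iff]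
  left_inv v := by
    funext j
    unfold toBVfun ofBVfun
    by_cases h : j.1 % 2 = 0
    · rw [if_pos h]
      have hj : (⟨2 * (j.1 / 2), by have := j.2; omega⟩ : Fin (2 * n)) = j := by
        apply Fin.ext
        show 2 * (j.1 / 2) = j.1
        omega
      exact congrArg v hj
    · rw [if_neg h]
      have hj : (⟨2 * (j.1 / 2) + 1, by have := j.2; omega⟩ : Fin (2 * n)) = j := by
        apply Fin.ext
        show 2 * (j.1 / 2) + 1 = j.1
        omega
      exact congrArg v hj
  right_inv w := by
    funext i
    unfold toBVfun ofBVfun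
    have h1 : (2 * i.1) % 2 = 0 := by omega
    have h2 : ¬ ((2 * i.1 + 1) % 2 = 0) := by omega
    have hj1 : (⟨2 * i.1 / 2, by have := i.2; omega⟩ : Fin n) = i := by
      apply Fin.ext
      show 2 * i.1 / 2 = i.1
      omega
    have hj2 : (⟨(2 * i.1 + 1) / 2, by have := i.2; omega⟩ : Fin n) = i := by
      apply Fin.ext
      show (2 * i.1 + 1) / 2 = i.1
      omega
    rw [Prod.ext_iff]
    constructor
    · simp only [if_pos h1]
      exact congrArg (fun t => (w t).1) hj1
    · simp only [if_neg h2]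
      exact congrArg (fun t => (w t).2) hj2

lemma toBV_apply {n : ℕ} (v : Fin (2 * n) → R) (i : Fin n) :
    (toBV v : BV n R) i =
      (v ⟨2 * i.1, by have := i.2; omega⟩, v ⟨2 * i.1 + 1, by have := i.2; omega⟩) := rfl

/-- the symplectic forms correspond -/
lemma symForm_toBV {n : ℕ} (x y : Fin (2 * n) → R) :
    symForm x y = hB (toBV x) (toBV y) := by
  apply Finset.sum_congr rfl
  intro i _
  rw [toBV_apply, toBV_apply]
  ring

/-- the standard basis of the block model -/
def psiBV {n : ℕ} : ((Fin n ⊕ Fin n) → R) ≃ₗ[R] BV n R where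
  toFun f := fun i => (f (Sum.inl i), f (Sum.inr i))
  invFun w := Sum.elim (fun i => (w i).1) (fun i => (w i).2)
  map_add' a b := by funext i; simp
  map_smul' r a := by funext i; simp
  left_inv f := by
    funext p
    rcases p with i | i <;> rfl
  right_inv w := by
    funext i
    rfl

noncomputable def stdBasis (n : ℕ) : Module.Basis (Fin n ⊕ Fin n) R (BV n R) :=
  (Pi.basisFun R (Fin n ⊕ Fin n)).map psiBV

lemma stdBasis_inl {n : ℕ} (i : Fin n) : stdBasis (R := R) n (Sum.inl i) = Xb i := by
  rw [stdBasis, Module.Basis.map_apply, Pi.basisFun_apply]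
  funext l
  by_cases h : l = i
  · subst h
    simp [psiBV, Xb, Pi.single_apply]
  · simp [psiBV, Xb, Pi.single_apply, h, Ne.symm h, Prod.ext_iff]

lemma stdBasis_inr {n : ℕ} (i : Fin n) : stdBasis (R := R) n (Sum.inr i) = Yb i := by
  rw [stdBasis, Module.Basis.map_apply, Pi.basisFun_apply]
  funext l
  by_cases h : l = i
  · subst h
    simp [psiBV, Yb, Pi.single_apply]
  · simp [psiBV, Yb, Pi.single_apply, h, Ne.symm h, Prod.ext_iff]

end SympDev

/-- Let `R` be a commutative ring with `sr(R) < ∞`, `n ≥ sr(R) + k`, and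
`(v₁, …, v_k)` a unimodular sequence in `R^{2n}`. Then there is a hyperbolic basis
`{x₁, y₁, …, x_n, y_n}` of `R^{2n}` with `v₁, …, v_k ∈ ⟨x₁, y₁, …, x_{k−1}, y_{k−1}, x_k⟩`. -/
theorem statement15 (R : Type) [CommRing R] (hsr : {m | SatSR R m}.Nonempty)
    (n k : ℕ) (hn : srank R + k ≤ n) (v : Fin k → (Fin (2 * n) → R))
    (hv : LinearIndependent R v ∧
      ∃ N : Submodule R (Fin (2 * n) → R), IsCompl (Submodule.span R (Set.range v)) N) :
    ∃ x y : Fin n → (Fin (2 * n) → R),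
      (∃ B : Module.Basis (Fin n ⊕ Fin n) R (Fin (2 * n) → R),
        (∀ i, B (Sum.inl i) = x i) ∧ (∀ i, B (Sum.inr i) = y i)) ∧
      (∀ i j, symForm (x i) (y j) = if i = j then (1 : R) else 0) ∧
      (∀ i j, symForm (x i) (x j) = 0) ∧
      (∀ i j, symForm (y i) (y j) = 0) ∧
      ∀ l : Fin k, v l ∈ Submodule.span R
        ((x '' {j : Fin n | j.1 < k}) ∪ (y '' {j : Fin n | j.1 + 1 < k})) := by
  classical
  obtain ⟨hli, N, hcompl⟩ := hv
  by_cases h0 : (0 : R) = 1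
  · -- trivial ring
    haveI : Subsingleton R := subsingleton_of_zero_eq_one h0
    haveI hs1 : Subsingleton (Fin (2 * n) → R) :=
      ⟨fun a b => funext fun i => Subsingleton.elim _ _⟩
    haveI hs2 : Subsingleton ((Fin n ⊕ Fin n) →₀ R) :=
      ⟨fun a b => Finsupp.ext fun x => Subsingleton.elim _ _⟩
    let e0 : (Fin (2 * n) → R) ≃ₗ[R] ((Fin n ⊕ Fin n) →₀ R) :=
      { toFun := fun _ => 0
        map_add' := fun _ _ => Subsingleton.elim _ _
        map_smul' := fun _ _ => Subsingleton.elim _ _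
        invFun := fun _ => 0
        left_inv := fun _ => Subsingleton.elim _ _
        right_inv := fun _ => Subsingleton.elim _ _ }
    refine ⟨fun _ => 0, fun _ => 0, ⟨Module.Basis.ofRepr e0, fun i => Subsingleton.elim _ _,
      fun i => Subsingleton.elim _ _⟩, fun i j => Subsingleton.elim _ _,
      fun i j => Subsingleton.elim _ _, fun i j => Subsingleton.elim _ _, fun l => ?_⟩
    have hv0 : v l = 0 := Subsingleton.elim _ _
    rw [hv0]
    exact Submodule.zero_mem _
  · -- nontrivial ring
    set m := srank R with hmdef
    have hS : SatSR R m := Nat.sInf_mem hsr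
    have hm : 1 ≤ m := by
      by_contra hcon
      have hm0 : m = 0 := by omega
      have h00 : SatSR R 0 := by rw [← hm0]; exact hS
      obtain ⟨t, ht⟩ := h00 (fun _ => 1) ⟨fun _ => 1, by simp⟩
      obtain ⟨sfn, hsum⟩ := ht
      simp only [Finset.univ_eq_empty, Finset.sum_empty] at hsum
      exact h0 hsum
    -- dual functionals from the frame hypothesis
    set B0 := Module.Basis.span hli with hB0
    set proj := (Submodule.span R (Set.range v)).projectionOnto N hcompl with hprojdef
    set gs0 : Fin k → ((Fin (2 * n) → R) →ₗ[R] R) := fun l => (B0.coord l).comp proj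
      with hgs0
    have hdual : ∀ l l', gs0 l (v l') = if l' = l then 1 else 0 := by
      intro l l'
      rw [hgs0]
      simp only [LinearMap.comp_apply]
      have hmem : v l' ∈ Submodule.span R (Set.range v) := Submodule.subset_span ⟨l', rfl⟩
      have hp1 : proj (v l') = ⟨v l', hmem⟩ := by
        rw [hprojdef]
        exact Submodule.projectionOnto_apply_left hcompl ⟨v l', hmem⟩
      rw [hp1]
      have hp2 : (⟨v l', hmem⟩ : Submodule.span R (Set.range v)) = B0 l' := by
        apply Subtype.ext
        rw [hB0, Module.Basis.span_apply]
      rw [hp2, Module.Basis.coord_apply, Module.Basis.repr_self]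
      exact Finsupp.single_apply
    -- move to the block model
    set vB : Fin k → BV n R := fun l => toBV (v l) with hvB
    set gsB : Fin k → (BV n R →ₗ[R] R) :=
      fun l => (gs0 l).comp (toBV (n := n) (R := R)).symm.toLinearMap with hgsB
    have hdualB : ∀ l l', gsB l (vB l') = if l' = l then 1 else 0 := by
      intro l l'
      rw [hgsB, hvB]
      simp only [LinearMap.comp_apply, LinearEquiv.coe_coe, LinearEquiv.symm_apply_apply]
      exact hdual l l'
    obtain ⟨g, hpres, hsupp⟩ := mainlem hS hm k hn vB gsB hdualB
    have hpres' : ∀ a b : BV n R, hB (g.symm a) (g.symm b) = hB a b := by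
      intro a b
      have hh := hpres (g.symm a) (g.symm b)
      rw [LinearEquiv.apply_symm_apply, LinearEquiv.apply_symm_apply] at hh
      exact hh.symm
    set X : Fin n → (Fin (2 * n) → R) := fun i => toBV.symm (g.symm (Xb i)) with hX
    set Y : Fin n → (Fin (2 * n) → R) := fun i => toBV.symm (g.symm (Yb i)) with hY
    refine ⟨X, Y, ⟨(stdBasis n).map (g.symm.trans toBV.symm), ?_, ?_⟩, ?_, ?_, ?_, ?_⟩
    · intro i
      rw [Module.Basis.map_apply, stdBasis_inl, hX]
      rfl
    · intro i
      rw [Module.Basis.map_apply, stdBasis_inr, hY]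
      rfl
    · intro i j
      simp only [hX, hY]
      rw [symForm_toBV, LinearEquiv.apply_symm_apply, LinearEquiv.apply_symm_apply,
        hpres', hB_Yb_right]
      by_cases hij : i = j
      · subst hij
        simp
      · rw [Xb_apply_ne (Ne.symm hij), if_neg hij]
        rfl
    · intro i j
      simp only [hX]
      rw [symForm_toBV, LinearEquiv.apply_symm_apply, LinearEquiv.apply_symm_apply,
        hpres', hB_Xb_right]
      by_cases hij : i = j
      · subst hij
        simp
      · rw [Xb_apply_ne (Ne.symm hij)]
        simp
    · intro i j
      simp only [hY]
      rw [symForm_toBV, LinearEquiv.apply_symm_apply, LinearEquiv.apply_symm_apply,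
        hpres', hB_Yb_right]
      by_cases hij : i = j
      · subst hij
        simp
      · rw [Yb_apply_ne (Ne.symm hij)]
        rfl
    · intro l
      have h1 := (hsupp l).1
      have h2 := (hsupp l).2
      set wv : BV n R := g (vB l) with hwv
      have hexp := bv_expand wv Finset.univ (fun i hi => absurd (Finset.mem_univ i) hi)
      have hvl : v l = ∑ i : Fin n, ((wv i).1 • X i + (wv i).2 • Y i) := by
        have hv1 : v l = toBV.symm (g.symm wv) := by
          rw [hwv, hvB]
          rw [LinearEquiv.symm_apply_apply, LinearEquiv.symm_apply_apply]
        rw [hv1]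
        conv_lhs => rw [hexp]
        rw [map_sum, map_sum]
        apply Finset.sum_congr rfl
        intro i _
        rw [map_add, map_add, map_smul, map_smul, map_smul, map_smul]
      rw [hvl]
      apply Submodule.sum_mem
      intro i _
      apply Submodule.add_mem
      · by_cases hik : i.1 < k
        · exact Submodule.smul_mem _ _
            (Submodule.subset_span (Set.mem_union_left _ ⟨i, hik, rfl⟩))
        · have hzz : wv i = 0 := h1 i (by omega)
          rw [hzz]
          simp only [Prod.fst_zero, zero_smul]
          exact Submodule.zero_mem _
      · by_cases hik : i.1 + 1 < k
        · exact Submodule.smul_mem _ _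
            (Submodule.subset_span (Set.mem_union_right _ ⟨i, hik, rfl⟩))
        · by_cases hik2 : i.1 + 1 = k
          · have hzz : (wv i).2 = 0 := h2 i hik2
            rw [hzz, zero_smul]
            exact Submodule.zero_mem _
          · have hzz : wv i = 0 := h1 i (by omega)
            rw [hzz]
            simp only [Prod.snd_zero, zero_smul]
            exact Submodule.zero_mem _
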